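/- arXiv:2003.06283 — 3 statements merged into one kernel-verified Lean document; each statement's English description precedes it below -/
import Mathlib

section
/- Let ρ > 0, l ∈ ℕ, and let z : [0,1] × [0,∞) → ℝ^l be continuously differentiable and satisfy the transport equation z_t(x,t) = −ρ z_x(x,t) for all (x,t) ∈ [0,1] × [0,∞). Define Ω_k(t) = ∫₀¹ z(x,t) 𝓛_k(x) dx. Then for every k ∈ ℕ and every t ≥ 0, Ω_k'(t) = −ρ ( z(1,t) − (−1)^k z(0,t) − Σ_{j=0}^{k} ℓ_{kj} Ω_j(t) ). -/
open Finset

/-- The shifted Legendre polynomial on `[0,1]`: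
`𝓛_k(x) = (−1)^k ∑_{l=0}^{k} (−1)^l (k choose l) ((k+l) choose l) x^l`. -/
noncomputable def shiftedLegendre (k : ℕ) (x : ℝ) : ℝ :=
  (-1 : ℝ) ^ k *
    ∑ l ∈ range (k + 1),
      (-1 : ℝ) ^ l * (k.choose l) * ((k + l).choose l) * x ^ l

/-- The coefficients `ℓ_{kj} = (2j+1)(1 − (−1)^{k+j})` for `j ≤ k`,
and `ℓ_{kj} = 0` for `j > k`. -/
noncomputable def legendreCoeff (k j : ℕ) : ℝ :=
  if j ≤ k then (2 * (j : ℝ) + 1) * (1 - (-1 : ℝ) ^ (k + j)) else 0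


/-!
Writing `Ω_k(t) = ∫₀¹ 𝓛_k(x) z(x,t) dx`, differentiate under the integral sign (legitimate since
`z` is `C¹` and `[0,1]` is compact), replace `z_t` by `-ρ z_x`, and integrate by parts: the
boundary terms are `𝓛_k(1) z(1,t) - 𝓛_k(0) z(0,t) = z(1,t) - (-1)^k z(0,t)` and the remaining
integral is `∫ 𝓛_k' z = ∑_j ℓ_{kj} Ω_j`.

The Legendre facts come from Mathlib's `Polynomial.shiftedLegendre`, which is `(-1)^k 𝓛_k`.
Its values at `0` and `1` follow from the reflection symmetry `x ↦ 1 - x`, and differentiating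
Rodrigues' formula `n! Pₙ = Dⁿ (X(1-X))ⁿ` gives `P'_{n+2} = P'_n - (4n+6) P_{n+1}`, from which
the expansion of `𝓛_k'` follows by a two-step induction.
-/

namespace Polynomial

-- With `u = X(1-X)`: `u'² = 1 - 4u` and `u'' = -2`.
theorem derivative_derivative_X_mul_one_sub_X_pow (n : ℕ) :
    derivative (derivative ((X * (1 - X) : ℤ[X]) ^ (n + 2))) =
      ((n + 2 : ℕ) : ℤ[X]) * (((n + 1 : ℕ) : ℤ[X]) * (X * (1 - X)) ^ n -
        ((4 * n + 6 : ℕ) : ℤ[X]) * (X * (1 - X)) ^ (n + 1)) := by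
  simp only [derivative_pow_succ, derivative_mul, derivative_X, derivative_sub, derivative_one,
    derivative_natCast, derivative_zero, map_add, map_natCast, map_one]
  push_cast
  ring

theorem derivative_shiftedLegendre_add_two (n : ℕ) :
    derivative (Polynomial.shiftedLegendre (n + 2)) =
      derivative (Polynomial.shiftedLegendre n) -
        (4 * n + 6) * Polynomial.shiftedLegendre (n + 1) := by
  have rodrigues (m : ℕ) : derivative^[m] ((X * (1 - X) : ℤ[X]) ^ m) =
      (m.factorial : ℤ[X]) * Polynomial.shiftedLegendre m := by
    rw [mul_pow, factorial_mul_shiftedLegendre_eq]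
  refine nat_mul_inj' ?_ (n + 2).factorial_ne_zero
  calc ((n + 2).factorial : ℤ[X]) * derivative (Polynomial.shiftedLegendre (n + 2))
      = derivative^[n + 1] (derivative (derivative ((X * (1 - X) : ℤ[X]) ^ (n + 2)))) := by
        rw [← derivative_natCast_mul, ← rodrigues, ← Function.iterate_succ_apply' derivative]
        rfl
    _ = ((n + 2 : ℕ) : ℤ[X]) *
          (((n + 1 : ℕ) : ℤ[X]) * derivative (derivative^[n] ((X * (1 - X)) ^ n)) -
            ((4 * n + 6 : ℕ) : ℤ[X]) * derivative^[n + 1] ((X * (1 - X)) ^ (n + 1))) := by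
        rw [derivative_derivative_X_mul_one_sub_X_pow, iterate_derivative_natCast_mul,
          iterate_derivative_sub, iterate_derivative_natCast_mul, iterate_derivative_natCast_mul,
          Function.iterate_succ_apply']
    _ = _ := by
        rw [rodrigues, rodrigues, derivative_natCast_mul, Nat.factorial_succ (n + 1),
          Nat.factorial_succ n]
        push_cast
        ring

end Polynomial

theorem shiftedLegendre_eq_aeval (k : ℕ) (x : ℝ) :
    shiftedLegendre k x = (-1) ^ k * Polynomial.aeval x (Polynomial.shiftedLegendre k) := by
  simp only [shiftedLegendre, Polynomial.shiftedLegendre, map_sum, map_mul, map_pow,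
    Polynomial.aeval_C, Polynomial.aeval_X]
  simp only [eq_intCast, Int.cast_neg, Int.cast_one, Int.cast_natCast]
  exact congrArg _ (sum_congr rfl fun l _ => by rw [Nat.choose_symm_add])

theorem shiftedLegendre_apply_zero (k : ℕ) : shiftedLegendre k 0 = (-1) ^ k := by
  simp [shiftedLegendre_eq_aeval, ← Polynomial.coeff_zero_eq_aeval_zero',
    Polynomial.coeff_shiftedLegendre]

theorem shiftedLegendre_apply_one (k : ℕ) : shiftedLegendre k 1 = 1 := by
  rw [shiftedLegendre_eq_aeval, Polynomial.shiftedLegendre_eval_symm, sub_self, ← mul_assoc,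
    ← pow_add, ← two_mul, pow_mul]
  simp [← Polynomial.coeff_zero_eq_aeval_zero', Polynomial.coeff_shiftedLegendre]

theorem contDiff_shiftedLegendre (k : ℕ) {n : WithTop ℕ∞} :
    ContDiff ℝ n (shiftedLegendre k) := by
  simp_rw [funext (shiftedLegendre_eq_aeval k)]
  exact contDiff_const.mul (Polynomial.contDiff_aeval _ n)

theorem continuous_shiftedLegendre (k : ℕ) : Continuous (shiftedLegendre k) :=
  (contDiff_shiftedLegendre k (n := 0)).continuous

theorem sum_range_legendreCoeff_add_two (k : ℕ) (f : ℕ → ℝ) :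
    ∑ j ∈ range (k + 3), legendreCoeff (k + 2) j * f j =
      ∑ j ∈ range (k + 1), legendreCoeff k j * f j + 2 * (2 * k + 3) * f (k + 1) := by
  have hsame : ∀ j ∈ range (k + 1), legendreCoeff (k + 2) j = legendreCoeff k j := by
    intro j hj
    have hjk : j ≤ k := Nat.lt_succ_iff.mp (mem_range.mp hj)
    simp [legendreCoeff, hjk, hjk.trans (Nat.le_add_right k 2), pow_add]
  rw [sum_range_succ, sum_range_succ, sum_congr rfl fun j hj => by rw [hsame j hj]]
  have hodd : (-1 : ℝ) ^ (k + 2 + (k + 1)) = -1 := by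
    rw [show k + 2 + (k + 1) = 2 * (k + 1) + 1 by ring, pow_succ, pow_mul]; norm_num
  have heven : (-1 : ℝ) ^ (k + 2 + (k + 2)) = 1 := by
    rw [← two_mul, pow_mul]; norm_num
  simp only [legendreCoeff, le_refl, Nat.le_succ, if_true, hodd, heven]
  push_cast
  ring

theorem hasDerivAt_shiftedLegendre (k : ℕ) (x : ℝ) :
    HasDerivAt (shiftedLegendre k)
      (∑ j ∈ range (k + 1), legendreCoeff k j * shiftedLegendre j x) x := by
  have h := ((Polynomial.shiftedLegendre k).hasDerivAt_aeval x).const_mul ((-1 : ℝ) ^ k)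
  rw [← funext (shiftedLegendre_eq_aeval k)] at h
  refine h.congr_deriv ?_
  clear h
  induction k using Nat.twoStepInduction with
  | zero => simp [legendreCoeff, Polynomial.shiftedLegendre]
  | one => simp [legendreCoeff, Polynomial.shiftedLegendre, shiftedLegendre, sum_range_succ]
  | more k ih _ =>
    rw [sum_range_legendreCoeff_add_two, ← ih, Polynomial.derivative_shiftedLegendre_add_two,
      shiftedLegendre_eq_aeval]
    simp only [pow_succ, mul_neg, mul_one, neg_neg, Polynomial.aeval_sub, map_mul, map_add,
      map_ofNat, map_natCast, neg_mul]
    ring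

open MeasureTheory

theorem intervalIntegral_pi_apply {ι E : Type*} [Fintype ι] [NormedAddCommGroup E]
    [NormedSpace ℝ E] [CompleteSpace E] {f : ℝ → ι → E} {a b : ℝ}
    (hf : IntervalIntegrable f volume a b) (i : ι) :
    (∫ x in a..b, f x) i = ∫ x in a..b, f x i :=
  ((ContinuousLinearMap.proj (R := ℝ) (φ := fun _ => E) i).intervalIntegral_comp_comm hf).symm

theorem hasDerivAt_intervalIntegral_of_contDiff {E : Type*} [NormedAddCommGroup E]
    [NormedSpace ℝ E] {F : ℝ × ℝ → E} (hF : ContDiff ℝ 1 F) (a b t : ℝ) :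
    HasDerivAt (fun s => ∫ x in a..b, F (x, s))
      (∫ x in a..b, deriv (fun s => F (x, s)) t) t := by
  set F₂ : ℝ × ℝ → E := fun p => fderiv ℝ F p (0, 1)
  have hF₂ : Continuous F₂ := (hF.continuous_fderiv one_ne_zero).clm_apply continuous_const
  have hderiv (x s : ℝ) : HasDerivAt (fun s => F (x, s)) (F₂ (x, s)) s :=
    ((hF.differentiable one_ne_zero) (x, s)).hasFDerivAt.comp_hasDerivAt s
      ((hasDerivAt_const s x).prodMk (hasDerivAt_id s))
  have hslice (s : ℝ) : Continuous fun x => F (x, s) :=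
    hF.continuous.comp (continuous_id.prodMk continuous_const)
  obtain ⟨C, hC⟩ :=
    (isCompact_uIcc.prod (isCompact_closedBall t 1)).exists_bound_of_continuousOn
      hF₂.continuousOn
  simp_rw [fun x => (hderiv x t).deriv]
  exact (intervalIntegral.hasDerivAt_integral_of_dominated_loc_of_deriv_le (bound := fun _ => C)
    (Metric.ball_mem_nhds t one_pos)
    (Filter.Eventually.of_forall fun s => (hslice s).aestronglyMeasurable)
    ((hslice t).intervalIntegrable a b)
    (hF₂.comp (continuous_id.prodMk continuous_const)).aestronglyMeasurable
    (ae_of_all _ fun x hx s hs =>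
      hC (x, s) ⟨Set.uIoc_subset_uIcc hx, Metric.ball_subset_closedBall hs⟩)
    intervalIntegrable_const
    (ae_of_all _ fun x _ s _ => hderiv x s)).2

theorem integral_shiftedLegendre_smul_deriv {E : Type*} [NormedAddCommGroup E] [NormedSpace ℝ E]
    [CompleteSpace E] {u : ℝ → E} (hu : ContDiff ℝ 1 u) (k : ℕ) :
    ∫ x in (0 : ℝ)..1, shiftedLegendre k x • deriv u x =
      u 1 - (-1 : ℝ) ^ k • u 0 -
        ∑ j ∈ range (k + 1),
          legendreCoeff k j • ∫ x in (0 : ℝ)..1, shiftedLegendre j x • u x := by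
  have hcont (j : ℕ) : Continuous fun x => shiftedLegendre j x • u x :=
    (continuous_shiftedLegendre j).smul hu.continuous
  rw [intervalIntegral.integral_smul_deriv_eq_deriv_smul
    (fun x _ => hasDerivAt_shiftedLegendre k x)
    (fun x _ => (hu.differentiable one_ne_zero x).hasDerivAt)
    ((continuous_finsetSum _ fun j _ =>
      continuous_const.mul (continuous_shiftedLegendre j)).intervalIntegrable 0 1)
    ((hu.continuous_deriv le_rfl).intervalIntegrable 0 1),
    shiftedLegendre_apply_one, shiftedLegendre_apply_zero, one_smul]
  simp_rw [sum_smul, mul_smul]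
  rw [intervalIntegral.integral_finsetSum
    (f := fun j x => legendreCoeff k j • shiftedLegendre j x • u x) fun j _ =>
      (continuous_const.smul (hcont j)).intervalIntegrable 0 1]
  simp_rw [intervalIntegral.integral_smul]

theorem projection_dynamics_transport_general
    (ρ : ℝ) (l : ℕ)
    (z : ℝ × ℝ → Fin l → ℝ)
    (hz : ContDiff ℝ 1 z)
    (hpde : ∀ x ∈ Set.Icc (0:ℝ) 1, ∀ t ≥ (0:ℝ),
      deriv (fun s => z (x, s)) t = -ρ • deriv (fun y => z (y, t)) x)
    (Ω : ℕ → ℝ → Fin l → ℝ)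
    (hΩ : ∀ k t i, Ω k t i = ∫ x in (0:ℝ)..1, z (x, t) i * shiftedLegendre k x) :
    ∀ k : ℕ, ∀ t ≥ (0:ℝ),
      HasDerivAt (Ω k)
        (-ρ • (z (1, t) - (-1 : ℝ) ^ k • z (0, t) -
          ∑ j ∈ range (k + 1), legendreCoeff k j • Ω j t)) t := by
  intro k t ht
  have hslice (s : ℝ) : ContDiff ℝ 1 fun y => z (y, s) :=
    hz.comp (contDiff_id.prodMk contDiff_const)
  have hΩ_eq (j : ℕ) : Ω j = fun s => ∫ x in (0 : ℝ)..1, shiftedLegendre j x • z (x, s) := by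
    ext s i
    have hintegrable :
        IntervalIntegrable (fun x => shiftedLegendre j x • z (x, s)) volume 0 1 :=
      ((continuous_shiftedLegendre j).smul (hslice s).continuous).intervalIntegrable 0 1
    rw [hΩ, intervalIntegral_pi_apply hintegrable]
    simp [mul_comm]
  have hw : ContDiff ℝ 1 fun p : ℝ × ℝ => shiftedLegendre k p.1 • z p :=
    ((contDiff_shiftedLegendre k).comp contDiff_fst).smul hz
  rw [hΩ_eq k]
  refine (hasDerivAt_intervalIntegral_of_contDiff hw 0 1 t).congr_deriv ?_
  calc ∫ x in (0 : ℝ)..1, deriv (fun s => shiftedLegendre k x • z (x, s)) t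
      = ∫ x in (0 : ℝ)..1, -ρ • (shiftedLegendre k x • deriv (fun y => z (y, t)) x) := by
        refine intervalIntegral.integral_congr fun x hx => ?_
        rw [Set.uIcc_of_le zero_le_one] at hx
        have hdiff : DifferentiableAt ℝ (fun s => z (x, s)) t :=
          (hz.comp (contDiff_const.prodMk contDiff_id)).differentiable one_ne_zero t
        rw [deriv_fun_const_smul _ hdiff, hpde x hx t ht, smul_comm]
    _ = _ := by
        rw [intervalIntegral.integral_smul, integral_shiftedLegendre_smul_deriv (hslice t)]
        simp only [hΩ_eq]

/-- Dynamics of the Legendre projection coefficients of a solution of the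
transport equation `z_t = −ρ z_x` on `[0,1] × [0,∞)`:
`Ω_k'(t) = −ρ ( z(1,t) − (−1)^k z(0,t) − ∑_{j=0}^{k} ℓ_{kj} Ω_j(t) )`. -/
theorem projection_dynamics_transport
    (ρ : ℝ) (hρ : 0 < ρ) (l : ℕ)
    (z : ℝ × ℝ → Fin l → ℝ)
    (hz : ContDiff ℝ 1 z)
    (hpde : ∀ x ∈ Set.Icc (0:ℝ) 1, ∀ t ≥ (0:ℝ),
      deriv (fun s => z (x, s)) t = -ρ • deriv (fun y => z (y, t)) x)
    (Ω : ℕ → ℝ → Fin l → ℝ)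
    (hΩ : ∀ k t i, Ω k t i = ∫ x in (0:ℝ)..1, z (x, t) i * shiftedLegendre k x) :
    ∀ k : ℕ, ∀ t ≥ (0:ℝ),
      HasDerivAt (Ω k)
        (-ρ • (z (1, t) - (-1 : ℝ) ^ k • z (0, t) -
          ∑ j ∈ range (k + 1), legendreCoeff k j • Ω j t)) t :=
  projection_dynamics_transport_general ρ l z hz hpde Ω hΩ
end

section
/- Let n, m ∈ ℕ, let A ∈ ℝ^{n×n} be symmetric negative definite, let B ∈ ℝ^{n×m}, let C ∈ ℝ^{m×m} be symmetric, and let Θ ∈ ℝ^{(n+m)×(n+m)} be symmetric. Then there exists γ₀ > 0 such that for all γ ≥ γ₀ the symmetric block matrix [[A, B], [Bᵀ, C − γ I_m]] + (1/γ) Θ is negative definite. -/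
/-!
Write the form of the matrix as `q x - γ * p x + θ x / γ`, where `q` is the form of
`[[A, B], [Bᵀ, C]]`, `p x = ‖x_m‖²` and `θ` is the form of `Θ`. All three are homogeneous of
degree two, so it suffices to make the form negative on the unit sphere `S`. On `S`, `q` is
negative wherever `p ≥ 0` vanishes (this is where `A` enters), so by compactness
`q - γ₁ * p ≤ -δ` on `S` for some `γ₁` and `δ > 0`: the open sets `{q - k * p + 1 / (k + 1) < 0}`
increase with `k` and cover `S`. As `θ` is bounded on `S`, `θ / γ < δ` once `γ` is large.
-/

open Matrix Metric Set

theorem IsCompact.exists_sub_mul_le_neg {X : Type*} [TopologicalSpace X] {K : Set X}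
    (hK : IsCompact K) {q p : X → ℝ} (hq : Continuous q) (hp : Continuous p)
    (hp0 : ∀ x, 0 ≤ p x) (hqp : ∀ x ∈ K, p x = 0 → q x < 0) :
    ∃ γ δ : ℝ, 0 < δ ∧ ∀ x ∈ K, q x - γ * p x ≤ -δ := by
  let U : ℕ → Set X := fun k => {x | q x - k * p x + 1 / (k + 1) < 0}
  have hU_open : ∀ k, IsOpen (U k) := fun k => isOpen_lt (by fun_prop) continuous_const
  have hU_mono : Monotone U := by
    intro i j hij x hx
    have hij : (i : ℝ) ≤ j := Nat.cast_le.mpr hij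
    have : 1 / ((j : ℝ) + 1) ≤ 1 / (i + 1) := by gcongr
    have : i * p x ≤ j * p x := mul_le_mul_of_nonneg_right hij (hp0 x)
    simp only [U, mem_ofPred_eq] at hx ⊢
    linarith
  have hK_cover : K ⊆ ⋃ k, U k := by
    intro x hx
    rw [mem_iUnion]
    rcases (hp0 x).eq_or_lt with hpx | hpx
    · obtain ⟨k, hk⟩ := exists_nat_one_div_lt (neg_pos.mpr (hqp x hx hpx.symm))
      exact ⟨k, by simp only [U, mem_ofPred_eq, ← hpx]; linarith⟩
    · obtain ⟨k, hk⟩ := exists_nat_gt ((q x + 1) / p x)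
      have : q x + 1 < k * p x := (div_lt_iff₀ hpx).mp hk
      have : 1 / ((k : ℝ) + 1) ≤ 1 :=
        div_le_one_of_le₀ (by linarith [k.cast_nonneg (α := ℝ)]) (by positivity)
      exact ⟨k, by simp only [U, mem_ofPred_eq]; linarith⟩
  obtain ⟨k, hk⟩ := hK.elim_directed_cover U hU_open hK_cover hU_mono.directed_le
  refine ⟨k, 1 / (k + 1), by positivity, fun x hx => ?_⟩
  have hxk := hk hx
  simp only [U, mem_ofPred_eq] at hxk
  linarith

section Homogeneous

variable {E : Type*} [NormedAddCommGroup E] [NormedSpace ℝ E]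

theorem neg_of_forall_mem_sphere_neg {f : E → ℝ} (hf : ∀ (c : ℝ) x, f (c • x) = c ^ 2 * f x)
    (hS : ∀ x ∈ sphere (0 : E) 1, f x < 0) {x : E} (hx : x ≠ 0) : f x < 0 := by
  have hnx : ‖x‖ ≠ 0 := norm_ne_zero_iff.mpr hx
  have hx_eq : x = ‖x‖ • (‖x‖⁻¹ • x) := by rw [smul_smul, mul_inv_cancel₀ hnx, one_smul]
  rw [hx_eq, hf]
  exact mul_neg_of_pos_of_neg (by positivity) (hS _ (by simp [norm_smul, hnx]))

theorem exists_forall_sub_mul_add_div_neg [FiniteDimensional ℝ E] {q p θ : E → ℝ}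
    (hq : Continuous q) (hp : Continuous p) (hθ : Continuous θ)
    (hq2 : ∀ (c : ℝ) x, q (c • x) = c ^ 2 * q x) (hp2 : ∀ (c : ℝ) x, p (c • x) = c ^ 2 * p x)
    (hθ2 : ∀ (c : ℝ) x, θ (c • x) = c ^ 2 * θ x)
    (hp0 : ∀ x, 0 ≤ p x) (hqp : ∀ x ≠ 0, p x = 0 → q x < 0) :
    ∃ γ₀ : ℝ, 0 < γ₀ ∧ ∀ γ ≥ γ₀, ∀ x ≠ 0, q x - γ * p x + θ x / γ < 0 := by
  have hS := isCompact_sphere (0 : E) 1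
  obtain ⟨γ₁, δ, hδ, hqp_le⟩ := hS.exists_sub_mul_le_neg hq hp hp0 fun x hx =>
    hqp x (ne_zero_of_mem_sphere one_ne_zero ⟨x, hx⟩)
  obtain ⟨M, hM⟩ := hS.bddAbove_image hθ.continuousOn
  refine ⟨max (max γ₁ 1) (M / δ + 1), by positivity, fun γ hγ x hx => ?_⟩
  have hγ₁ : γ₁ ≤ γ := le_of_max_le_left (le_of_max_le_left hγ)
  have hγ_pos : 0 < γ := one_pos.trans_le (le_of_max_le_right (le_of_max_le_left hγ))
  have hMγ : M < γ * δ := (div_lt_iff₀ hδ).mp ((lt_add_one _).trans_le (le_of_max_le_right hγ))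
  refine neg_of_forall_mem_sphere_neg (f := fun x => q x - γ * p x + θ x / γ)
    (fun c x => by simp only [hq2, hp2, hθ2]; ring) (fun y hy => ?_) hx
  have hθy : θ y / γ < δ := by
    rw [div_lt_iff₀ hγ_pos, mul_comm]
    exact (hM (mem_image_of_mem θ hy)).trans_lt hMγ
  have : γ₁ * p y ≤ γ * p y := mul_le_mul_of_nonneg_right hγ₁ (hp0 y)
  linarith [hqp_le y hy]

end Homogeneous

section QuadraticForm

variable {R ι κ : Type*} [Fintype ι] [Fintype κ]

theorem smul_dotProduct_smul [CommSemiring R] (c : R) (u v : ι → R) :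
    c • u ⬝ᵥ c • v = c ^ 2 * (u ⬝ᵥ v) := by
  rw [smul_dotProduct, dotProduct_smul, smul_eq_mul, smul_eq_mul, ← mul_assoc, sq]

theorem smul_dotProduct_mulVec_smul [CommSemiring R] (M : Matrix ι ι R) (c : R) (x : ι → R) :
    c • x ⬝ᵥ M *ᵥ (c • x) = c ^ 2 * (x ⬝ᵥ M *ᵥ x) := by
  rw [mulVec_smul, smul_dotProduct_smul]

theorem continuous_dotProduct_mulVec_self [CommSemiring R] [TopologicalSpace R]
    [IsTopologicalSemiring R] (M : Matrix ι ι R) : Continuous fun x : ι → R => x ⬝ᵥ M *ᵥ x := by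
  fun_prop

theorem dotProduct_fromBlocks_mulVec_neg_of_comp_inr_eq_zero {A : Matrix ι ι ℝ}
    (hA : ∀ u ≠ 0, u ⬝ᵥ A *ᵥ u < 0) (B : Matrix ι κ ℝ) (B' : Matrix κ ι ℝ) (C : Matrix κ κ ℝ)
    {x : ι ⊕ κ → ℝ} (hx : x ≠ 0) (hxr : x ∘ Sum.inr = 0) :
    x ⬝ᵥ fromBlocks A B B' C *ᵥ x < 0 := by
  have hx_eq : x = Sum.elim (x ∘ Sum.inl) 0 := by rw [← hxr, Sum.elim_comp_inl_inr]
  have hxl : x ∘ Sum.inl ≠ 0 := fun h => hx (by rw [hx_eq, h, Sum.elim_zero_zero])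
  rw [hx_eq, fromBlocks_mulVec, sumElim_dotProduct_sumElim]
  simpa using hA _ hxl

theorem dotProduct_fromBlocks_sub_smul_one_mulVec [CommRing R] [DecidableEq κ]
    (A : Matrix ι ι R) (B : Matrix ι κ R) (B' : Matrix κ ι R) (C : Matrix κ κ R) (γ : R)
    (x : ι ⊕ κ → R) :
    x ⬝ᵥ fromBlocks A B B' (C - γ • 1) *ᵥ x =
      x ⬝ᵥ fromBlocks A B B' C *ᵥ x - γ * (x ∘ Sum.inr ⬝ᵥ x ∘ Sum.inr) := by
  rw [← Sum.elim_comp_inl_inr x]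
  simp only [fromBlocks_mulVec, sumElim_dotProduct_sumElim, sub_mulVec, smul_mulVec, one_mulVec,
    add_sub_assoc, dotProduct_add, dotProduct_sub, dotProduct_smul, smul_eq_mul, Sum.elim_comp_inr]

end QuadraticForm

theorem block_negative_definite_large_gamma_general
    (n m : ℕ)
    (A : Matrix (Fin n) (Fin n) ℝ)
    (hAnd : ∀ v : Fin n → ℝ, v ≠ 0 → v ⬝ᵥ A.mulVec v < 0)
    (B : Matrix (Fin n) (Fin m) ℝ)
    (C : Matrix (Fin m) (Fin m) ℝ)
    (Θ : Matrix (Fin n ⊕ Fin m) (Fin n ⊕ Fin m) ℝ) :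
    ∃ γ₀ : ℝ, 0 < γ₀ ∧
      ∀ γ ≥ γ₀, ∀ x : Fin n ⊕ Fin m → ℝ, x ≠ 0 →
        x ⬝ᵥ (fromBlocks A B Bᵀ (C - γ • (1 : Matrix (Fin m) (Fin m) ℝ)) +
            (1 / γ) • Θ).mulVec x < 0 := by
  obtain ⟨γ₀, hγ₀, hneg⟩ := exists_forall_sub_mul_add_div_neg
    (p := fun x : Fin n ⊕ Fin m → ℝ => x ∘ Sum.inr ⬝ᵥ x ∘ Sum.inr)
    (continuous_dotProduct_mulVec_self (fromBlocks A B Bᵀ C)) (by fun_prop)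
    (continuous_dotProduct_mulVec_self Θ) (smul_dotProduct_mulVec_smul _)
    (fun c x => smul_dotProduct_smul c (x ∘ Sum.inr) (x ∘ Sum.inr))
    (smul_dotProduct_mulVec_smul Θ)
    (fun x => by simpa using dotProduct_star_self_nonneg (x ∘ Sum.inr))
    (fun x hx hxr => dotProduct_fromBlocks_mulVec_neg_of_comp_inr_eq_zero hAnd B Bᵀ C hx
      (dotProduct_self_eq_zero.mp hxr))
  refine ⟨γ₀, hγ₀, fun γ hγ x hx => ?_⟩
  rw [add_mulVec, dotProduct_add, dotProduct_fromBlocks_sub_smul_one_mulVec, smul_mulVec,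
    dotProduct_smul, smul_eq_mul, one_div_mul_eq_div]
  exact hneg γ hγ x hx

/-- For `A` symmetric negative definite, `C`, `Θ` symmetric and any `B`, there
exists `γ₀ > 0` such that for all `γ ≥ γ₀` the block matrix
`[[A, B], [Bᵀ, C − γ I]] + (1/γ) Θ` is negative definite. -/
theorem block_negative_definite_large_gamma
    (n m : ℕ)
    (A : Matrix (Fin n) (Fin n) ℝ) (hAsymm : A.IsSymm)
    (hAnd : ∀ v : Fin n → ℝ, v ≠ 0 → v ⬝ᵥ A.mulVec v < 0)
    (B : Matrix (Fin n) (Fin m) ℝ)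
    (C : Matrix (Fin m) (Fin m) ℝ) (hCsymm : C.IsSymm)
    (Θ : Matrix (Fin n ⊕ Fin m) (Fin n ⊕ Fin m) ℝ) (hΘsymm : Θ.IsSymm) :
    ∃ γ₀ : ℝ, 0 < γ₀ ∧
      ∀ γ ≥ γ₀, ∀ x : Fin n ⊕ Fin m → ℝ, x ≠ 0 →
        x ⬝ᵥ (fromBlocks A B Bᵀ (C - γ • (1 : Matrix (Fin m) (Fin m) ℝ)) +
            (1 / γ) • Θ).mulVec x < 0 :=
  block_negative_definite_large_gamma_general n m A hAnd B C Θ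
end

section
/- Let n_ξ, n ∈ ℕ, γ > 0, let P ∈ ℝ^{(n_ξ+n)×(n_ξ+n)} and Z ∈ ℝ^{n_ξ×n_ξ} be symmetric with P − diag(Z, 0_n) positive semidefinite, and let M be a symmetric matrix. Suppose ξ : [0,∞) → ℝ^{n_ξ} and X : [0,∞) → ℝ^n are continuously differentiable with ξ(0) = 0 and X(0) = 0, and ψ, y, d are continuous signals such that: (i) for all t ≥ 0, d/dt ( (ξ(t), X(t))ᵀ P (ξ(t), X(t)) ) + ψ(t)ᵀ M ψ(t) + (1/γ) ‖y(t)‖² − γ ‖d(t)‖² ≤ 0; and (ii) for all T ≥ 0, ∫₀^T ψ(t)ᵀ M ψ(t) dt + ξ(T)ᵀ Z ξ(T) ≥ 0 (finite-horizon IQC with terminal cost Z). Then for all T ≥ 0, ∫₀^T ‖y(t)‖² dt ≤ γ² ∫₀^T ‖d(t)‖² dt. -/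
/-!
Integrating the dissipation inequality from the zero initial state gives
`∫₀^T ψᵀMψ + (1/γ)∫₀^T ‖y‖² - γ∫₀^T ‖d‖² ≤ -V(T)`, where `V` is the storage `(ξ, X)ᵀ P (ξ, X)`.
Since `P - diag(Z, 0)` is positive semidefinite, `V(T) ≥ ξ(T)ᵀ Z ξ(T)`, and the terminal-cost IQC
says exactly that `∫₀^T ψᵀMψ + ξ(T)ᵀ Z ξ(T) ≥ 0`; hence `(1/γ)∫₀^T ‖y‖² ≤ γ∫₀^T ‖d‖²`.
-/

open Matrix

section Calculus

variable {𝕜 E m n : Type*} [NontriviallyNormedField 𝕜] [NormedAddCommGroup E] [NormedSpace 𝕜 E]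

theorem Differentiable.dotProduct [Fintype m] {u v : E → m → 𝕜} (hu : Differentiable 𝕜 u)
    (hv : Differentiable 𝕜 v) : Differentiable 𝕜 fun x => u x ⬝ᵥ v x := by
  change Differentiable 𝕜 fun x => ∑ i, u x i * v x i
  have := differentiable_pi.1 hu
  have := differentiable_pi.1 hv
  fun_prop

theorem Differentiable.matrix_mulVec [Fintype m] {v : E → m → 𝕜} (A : Matrix n m 𝕜)
    (hv : Differentiable 𝕜 v) : Differentiable 𝕜 fun x => A *ᵥ v x :=
  differentiable_pi.2 fun i => (differentiable_const (A i)).dotProduct hv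

theorem Differentiable.sumElim {u : E → m → 𝕜} {w : E → n → 𝕜}
    (hu : Differentiable 𝕜 u) (hw : Differentiable 𝕜 w) :
    Differentiable 𝕜 fun x => Sum.elim (u x) (w x) := by
  refine differentiable_pi.2 fun i => ?_
  cases i with
  | inl i => exact differentiable_pi.1 hu i
  | inr i => exact differentiable_pi.1 hw i

end Calculus

theorem integral_le_sub_of_deriv_add_le_zero {V s : ℝ → ℝ} {a b : ℝ} (hab : a ≤ b)
    (hV : Differentiable ℝ V) (hs : Continuous s) (h : ∀ t ∈ Set.Ioo a b, deriv V t + s t ≤ 0) :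
    ∫ t in a..b, s t ≤ V a - V b := by
  have := intervalIntegral.sub_le_integral_of_hasDeriv_right_of_le (φ := fun t => -s t) hab
    hV.continuous.continuousOn (fun t _ => (hV t).hasDerivAt.hasDerivWithinAt)
    hs.neg.integrableOn_Icc (fun t ht => by linarith [h t ht])
  rw [intervalIntegral.integral_neg] at this
  linarith

theorem sumElim_dotProduct_fromBlocks_zero_mulVec {R m n : Type*} [Fintype m] [Fintype n]
    [NonUnitalNonAssocSemiring R] (Z : Matrix m m R) (u : m → R) (w : n → R) :
    Sum.elim u w ⬝ᵥ fromBlocks Z 0 0 (0 : Matrix n n R) *ᵥ Sum.elim u w = u ⬝ᵥ Z *ᵥ u := by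
  simp [fromBlocks_mulVec, sumElim_dotProduct_sumElim]

theorem dotProduct_mulVec_le_of_sub_fromBlocks_nonneg {m n : Type*} [Fintype m] [Fintype n]
    {P : Matrix (m ⊕ n) (m ⊕ n) ℝ} {Z : Matrix m m ℝ}
    (hPZ : ∀ x, 0 ≤ x ⬝ᵥ (P - fromBlocks Z 0 0 (0 : Matrix n n ℝ)) *ᵥ x) (u : m → ℝ) (w : n → ℝ) :
    u ⬝ᵥ Z *ᵥ u ≤ Sum.elim u w ⬝ᵥ P *ᵥ Sum.elim u w := by
  have := hPZ (Sum.elim u w)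
  rwa [sub_mulVec, dotProduct_sub, sumElim_dotProduct_fromBlocks_zero_mulVec, sub_nonneg] at this

theorem dissipation_IQC_implies_gain_bound_general
    (nξ n pψ p r : ℕ) (γ : ℝ) (hγ : 0 < γ)
    (P : Matrix (Fin nξ ⊕ Fin n) (Fin nξ ⊕ Fin n) ℝ)
    (Z : Matrix (Fin nξ) (Fin nξ) ℝ)
    (hPZ : ∀ x : Fin nξ ⊕ Fin n → ℝ,
      0 ≤ x ⬝ᵥ (P - fromBlocks Z 0 0 (0 : Matrix (Fin n) (Fin n) ℝ)).mulVec x)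
    (M : Matrix (Fin pψ) (Fin pψ) ℝ)
    (ξ : ℝ → Fin nξ → ℝ) (X : ℝ → Fin n → ℝ)
    (hξ : ContDiff ℝ 1 ξ) (hX : ContDiff ℝ 1 X)
    (hξ0 : ξ 0 = 0) (hX0 : X 0 = 0)
    (ψ : ℝ → Fin pψ → ℝ) (y : ℝ → Fin p → ℝ) (d : ℝ → Fin r → ℝ)
    (hψ : Continuous ψ) (hy : Continuous y) (hd : Continuous d)
    (hdissip : ∀ t ≥ (0:ℝ),
      deriv (fun s => Sum.elim (ξ s) (X s) ⬝ᵥ P.mulVec (Sum.elim (ξ s) (X s))) t +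
          ψ t ⬝ᵥ M.mulVec (ψ t) +
          (1 / γ) * ∑ i, (y t i) ^ 2 - γ * ∑ i, (d t i) ^ 2 ≤ 0)
    (hIQC : ∀ T ≥ (0:ℝ),
      (∫ t in (0:ℝ)..T, ψ t ⬝ᵥ M.mulVec (ψ t)) + ξ T ⬝ᵥ Z.mulVec (ξ T) ≥ 0) :
    ∀ T ≥ (0:ℝ),
      (∫ t in (0:ℝ)..T, ∑ i, (y t i) ^ 2) ≤
        γ ^ 2 * ∫ t in (0:ℝ)..T, ∑ i, (d t i) ^ 2 := by
  intro T hT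
  have hstate := (hξ.differentiable one_ne_zero).sumElim (hX.differentiable one_ne_zero)
  have hψM : Continuous fun t => ψ t ⬝ᵥ M *ᵥ ψ t := hψ.dotProduct (continuous_const.matrix_mulVec hψ)
  have hy2 : Continuous fun t => ∑ i, y t i ^ 2 := by fun_prop
  have hd2 : Continuous fun t => ∑ i, d t i ^ 2 := by fun_prop
  have hstorage := integral_le_sub_of_deriv_add_le_zero
    (s := fun t => ψ t ⬝ᵥ M *ᵥ ψ t + 1 / γ * ∑ i, y t i ^ 2 - γ * ∑ i, d t i ^ 2) hT
    (hstate.dotProduct (hstate.matrix_mulVec P)) (by fun_prop)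
    (fun t ht => by linarith [hdissip t ht.1.le])
  have hIy : IntervalIntegrable (fun t => 1 / γ * ∑ i, y t i ^ 2) MeasureTheory.volume 0 T :=
    (continuous_const.mul hy2).intervalIntegrable _ _
  have hId : IntervalIntegrable (fun t => γ * ∑ i, d t i ^ 2) MeasureTheory.volume 0 T :=
    (continuous_const.mul hd2).intervalIntegrable _ _
  rw [intervalIntegral.integral_sub ((hψM.intervalIntegrable _ _).add hIy) hId,
    intervalIntegral.integral_add (hψM.intervalIntegrable _ _) hIy,
    intervalIntegral.integral_const_mul, intervalIntegral.integral_const_mul] at hstorage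
  have hterminal := dotProduct_mulVec_le_of_sub_fromBlocks_nonneg hPZ (ξ T) (X T)
  have hgain : 1 / γ * ∫ t in (0:ℝ)..T, ∑ i, y t i ^ 2 ≤ γ * ∫ t in (0:ℝ)..T, ∑ i, d t i ^ 2 := by
    simp only [hξ0, hX0, Sum.elim_zero_zero, zero_dotProduct] at hstorage
    linarith [hIQC T hT]
  rw [div_mul_eq_mul_div, one_mul, div_le_iff₀ hγ] at hgain
  linarith

/-- Dissipation plus finite-horizon IQC with terminal cost implies the
`L²`-gain bound `∫₀^T ‖y‖² dt ≤ γ² ∫₀^T ‖d‖² dt`. -/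
theorem dissipation_IQC_implies_gain_bound
    (nξ n pψ p r : ℕ) (γ : ℝ) (hγ : 0 < γ)
    (P : Matrix (Fin nξ ⊕ Fin n) (Fin nξ ⊕ Fin n) ℝ) (hPsymm : P.IsSymm)
    (Z : Matrix (Fin nξ) (Fin nξ) ℝ) (hZsymm : Z.IsSymm)
    (hPZ : ∀ x : Fin nξ ⊕ Fin n → ℝ,
      0 ≤ x ⬝ᵥ (P - fromBlocks Z 0 0 (0 : Matrix (Fin n) (Fin n) ℝ)).mulVec x)
    (M : Matrix (Fin pψ) (Fin pψ) ℝ) (hMsymm : M.IsSymm)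
    (ξ : ℝ → Fin nξ → ℝ) (X : ℝ → Fin n → ℝ)
    (hξ : ContDiff ℝ 1 ξ) (hX : ContDiff ℝ 1 X)
    (hξ0 : ξ 0 = 0) (hX0 : X 0 = 0)
    (ψ : ℝ → Fin pψ → ℝ) (y : ℝ → Fin p → ℝ) (d : ℝ → Fin r → ℝ)
    (hψ : Continuous ψ) (hy : Continuous y) (hd : Continuous d)
    (hdissip : ∀ t ≥ (0:ℝ),
      deriv (fun s => Sum.elim (ξ s) (X s) ⬝ᵥ P.mulVec (Sum.elim (ξ s) (X s))) t +
          ψ t ⬝ᵥ M.mulVec (ψ t) +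
          (1 / γ) * ∑ i, (y t i) ^ 2 - γ * ∑ i, (d t i) ^ 2 ≤ 0)
    (hIQC : ∀ T ≥ (0:ℝ),
      (∫ t in (0:ℝ)..T, ψ t ⬝ᵥ M.mulVec (ψ t)) + ξ T ⬝ᵥ Z.mulVec (ξ T) ≥ 0) :
    ∀ T ≥ (0:ℝ),
      (∫ t in (0:ℝ)..T, ∑ i, (y t i) ^ 2) ≤
        γ ^ 2 * ∫ t in (0:ℝ)..T, ∑ i, (d t i) ^ 2 :=
  dissipation_IQC_implies_gain_bound_general nξ n pψ p r γ hγ P Z hPZ M ξ X hξ hX hξ0 hX0 ψ y d hψ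
    hy hd hdissip hIQC
end
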